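/- Let n ≥ 1 and k ≥ 1 be integers and b ∈ ℝⁿ. Set λ(k,b) := inf{ Σ_{i=1}^n (m_i + k b_i)² : m ∈ ℤⁿ }. Let g : ℝⁿ → Mₙ(ℝ) be a smooth map which is 2πℤⁿ-periodic and such that g(θ) is a symmetric positive definite matrix for every θ, and let N > 0 be a real number such that vᵀ g(θ) v ≤ N‖v‖² for all v ∈ ℝⁿ and all θ (i.e. every eigenvalue of every g(θ) is at most N). Write g^{ij}(θ) for the (i,j) entry of the inverse matrix g(θ)⁻¹. Then for every smooth 2πℤⁿ-periodic function φ : ℝⁿ → ℂ, ∫_{[0,2π]ⁿ} Σ_{i,j=1}^n (∂φ/∂θ^i + √(−1) k b_i φ)·conj(∂φ/∂θ^j + √(−1) k b_j φ)·g^{ij}(θ) dθ ≥ (λ(k,b)/N) · ∫_{[0,2π]ⁿ} |φ(θ)|² dθ. (The left-hand side is a nonnegative real number since each g(θ)⁻¹ is positive definite.) -/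

import Mathlib

open MeasureTheory Matrix

section AuxiliaryLemmas
open AddCircle Real


lemma sInf_lattice_eq (n : ℕ) (c : Fin n → ℝ) :
    sInf {x : ℝ | ∃ m : Fin n → ℤ, x = ∑ i, ((m i : ℝ) + c i) ^ 2}
      = ∑ i, (c i - round (c i)) ^ 2 := by
  apply le_antisymm
  · apply csInf_le
    · refine ⟨0, ?_⟩
      rintro x ⟨m, rfl⟩
      positivity
    · refine ⟨fun i => -round (c i), ?_⟩
      congr 1; ext i
      push_cast
      ring
  · apply le_csInf
    · exact ⟨_, ⟨fun i => -round (c i), rfl⟩⟩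
    · rintro x ⟨m, rfl⟩
      apply Finset.sum_le_sum
      intro i _
      have h := round_le (c i) (-(m i))
      have : |c i - round (c i)| ≤ |(m i : ℝ) + c i| := by
        rw [show (c i - (-(m i) : ℤ) : ℝ) = (m i : ℝ) + c i by push_cast; ring] at h
        exact h
      calc (c i - round (c i))^2 = |c i - round (c i)|^2 := (sq_abs _).symm
        _ ≤ |(m i : ℝ) + c i|^2 := by
            apply pow_le_pow_left₀ (abs_nonneg _) this
        _ = ((m i : ℝ) + c i)^2 := sq_abs _

lemma real_quad_inv_lower {n : ℕ} (B : Matrix (Fin n) (Fin n) ℝ) (hB : B.PosDef)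
    (N : ℝ) (hN : 0 < N)
    (hbound : ∀ v : Fin n → ℝ, v ⬝ᵥ B.mulVec v ≤ N * ∑ i, v i ^ 2)
    (x : Fin n → ℝ) :
    (1 / N) * ∑ i, x i ^ 2 ≤ x ⬝ᵥ B⁻¹.mulVec x := by
  have hdet : IsUnit B.det := isUnit_iff_ne_zero.2 hB.det_pos.ne'
  set w : Fin n → ℝ := B⁻¹.mulVec x with hw
  have hBw : B.mulVec w = x := by
    rw [hw, Matrix.mulVec_mulVec, Matrix.mul_nonsing_inv B hdet, Matrix.one_mulVec]
  have hsymm : Bᵀ = B := hB.isHermitian.eq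
  -- x ⬝ B⁻¹ x = w ⬝ B w
  have h1 : x ⬝ᵥ B⁻¹.mulVec x = w ⬝ᵥ B.mulVec w := by
    rw [hBw]
    exact dotProduct_comm x w
  -- x ⬝ B w = x ⬝ x
  have h2 : x ⬝ᵥ B.mulVec w = ∑ i, x i ^ 2 := by
    rw [hBw, dotProduct]
    exact Finset.sum_congr rfl fun i _ => (sq (x i)).symm
  have h3 : w ⬝ᵥ B.mulVec x = ∑ i, x i ^ 2 := by
    rw [Matrix.dotProduct_mulVec, ← Matrix.mulVec_transpose, hsymm, hBw, ← h2, hBw]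
  have h4 : x ⬝ᵥ B.mulVec x ≤ N * ∑ i, x i ^ 2 := hbound x
  have h5 : (0:ℝ) ≤ (w - (1/N) • x) ⬝ᵥ B.mulVec (w - (1/N) • x) := by
    rcases eq_or_ne (w - (1/N) • x) 0 with h | h
    · rw [h]; simp
    · exact le_of_lt (by simpa using hB.dotProduct_mulVec_pos h)
  have hexp : (w - (1/N) • x) ⬝ᵥ B.mulVec (w - (1/N) • x)
      = w ⬝ᵥ B.mulVec w - (1/N) * (w ⬝ᵥ B.mulVec x) - (1/N) * (x ⬝ᵥ B.mulVec w)
        + (1/N)^2 * (x ⬝ᵥ B.mulVec x) := by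
    rw [Matrix.mulVec_sub, Matrix.mulVec_smul]
    rw [sub_dotProduct, smul_dotProduct]
    rw [dotProduct_sub, dotProduct_sub, dotProduct_smul,
      dotProduct_smul]
    simp only [smul_eq_mul]
    ring
  rw [h1]
  rw [hexp, h2, h3] at h5
  have h6 : (1/N)^2 * (x ⬝ᵥ B.mulVec x) ≤ (1/N)^2 * (N * ∑ i, x i ^ 2) :=
    mul_le_mul_of_nonneg_left h4 (by positivity)
  have h7 : (1/N)^2 * (N * ∑ i, x i ^ 2) = (1/N) * ∑ i, x i ^ 2 := by
    field_simp
  linarith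

lemma re_hermitian_sum {n : ℕ} (A : Matrix (Fin n) (Fin n) ℝ) (v : Fin n → ℂ) :
    (∑ i, ∑ j, v i * (starRingEnd ℂ) (v j) * ((A i j : ℝ) : ℂ)).re
      = (fun i => (v i).re) ⬝ᵥ A.mulVec (fun i => (v i).re)
        + (fun i => (v i).im) ⬝ᵥ A.mulVec (fun i => (v i).im) := by
  rw [Complex.re_sum]
  simp only [dotProduct, mulVec]
  rw [← Finset.sum_add_distrib]
  refine Finset.sum_congr rfl fun i _ => ?_
  rw [Complex.re_sum]
  simp only [Finset.mul_sum]
  rw [← Finset.sum_add_distrib]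
  refine Finset.sum_congr rfl fun j _ => ?_
  simp [Complex.mul_re, Complex.mul_im, Complex.conj_re, Complex.conj_im]
  ring

lemma sum_norm_sq_eq {n : ℕ} (v : Fin n → ℂ) :
    ∑ i, ‖v i‖ ^ 2 = (∑ i, (v i).re ^ 2) + ∑ i, (v i).im ^ 2 := by
  rw [← Finset.sum_add_distrib]
  refine Finset.sum_congr rfl fun i _ => ?_
  rw [Complex.sq_norm, Complex.normSq_apply]
  ring

section parseval
variable {T : ℝ} [hT : Fact (0 < T)]

lemma summable_sq_fourierCoeff (f : C(AddCircle T, ℂ)) :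
    Summable (fun n : ℤ => ‖fourierCoeff (⇑f) n‖ ^ 2) := by
  have h := lp.memℓp (fourierBasis.repr (ContinuousMap.toLp (E := ℂ) 2 haarAddCircle ℂ f))
  rw [memℓp_gen_iff (by norm_num : 0 < (2 : ENNReal).toReal)] at h
  have : ∀ n : ℤ, ‖fourierBasis.repr (ContinuousMap.toLp (E := ℂ) 2 haarAddCircle ℂ f) n‖
      ^ (2 : ENNReal).toReal = ‖fourierCoeff (⇑f) n‖ ^ 2 := by
    intro n
    rw [fourierBasis_repr, fourierCoeff_toLp]
    norm_num
  rwa [funext this] at h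

lemma parseval_continuous (f : C(AddCircle T, ℂ)) :
    ∑' n : ℤ, ‖fourierCoeff (⇑f) n‖ ^ 2 = ∫ t, ‖f t‖ ^ 2 ∂haarAddCircle := by
  have h := tsum_sq_fourierCoeff (ContinuousMap.toLp (E := ℂ) 2 haarAddCircle ℂ f)
  simp_rw [fourierCoeff_toLp] at h
  rw [h]
  apply MeasureTheory.integral_congr_ae
  filter_upwards [ContinuousMap.coeFn_toLp (p := 2) (μ := haarAddCircle) (𝕜 := ℂ) f] with t ht
  rw [ht]

lemma integral_haar_eq_intervalIntegral (g : AddCircle T → ℝ) :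
    ∫ t, g t ∂haarAddCircle = (1 / T) * ∫ x in (0:ℝ)..T, g x := by
  have h := AddCircle.intervalIntegral_preimage (T := T) 0 g
  rw [zero_add] at h
  have h2 : ∫ (b : AddCircle T), g b = T * ∫ t, g t ∂haarAddCircle := by
    rw [volume_eq_smul_haarAddCircle, MeasureTheory.integral_smul_measure,
      ENNReal.toReal_ofReal hT.out.le, smul_eq_mul]
  rw [h2] at h
  rw [h]
  rw [eq_comm, mul_comm T, one_div, mul_comm, mul_assoc, mul_inv_cancel₀ hT.out.ne', mul_one]

end parseval

lemma oneD (c : ℝ) (f f' : ℝ → ℂ)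
    (hf : ∀ x, HasDerivAt f (f' x) x) (hf'c : Continuous f')
    (hper : ∀ x, f (x + 2 * π) = f x) :
    ((c : ℝ) - round c) ^ 2 * ∫ x in Set.Icc (0:ℝ) (2 * π), ‖f x‖ ^ 2
      ≤ ∫ x in Set.Icc (0:ℝ) (2 * π), ‖f' x + Complex.I * c * f x‖ ^ 2 := by
  have hπ : (0:ℝ) < 2 * π := by positivity
  haveI : Fact ((0:ℝ) < 2 * π) := ⟨hπ⟩
  have hfc : Continuous f := continuous_iff_continuousAt.2 fun x => (hf x).continuousAt
  have f0 : f (2 * π) = f 0 := by simpa using hper 0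
  -- periodicity of f'
  have hf'per : ∀ x, f' (x + 2 * π) = f' x := by
    intro x
    have h1 : HasDerivAt (fun y : ℝ => f (y + 2 * π)) (f' (x + 2 * π)) x :=
      HasDerivAt.comp_add_const x (2 * π) (hf (x + 2 * π))
    have h2 : (fun y : ℝ => f (y + 2 * π)) = f := funext hper
    rw [h2] at h1
    exact h1.unique (hf x)
  set G : ℝ → ℂ := fun x => f' x + Complex.I * c * f x with hGdef
  have hGc : Continuous G := hf'c.add ((continuous_const).mul hfc)
  have G0 : G (2 * π) = G 0 := by
    simp only [hGdef]
    rw [f0, show f' (2 * π) = f' 0 by simpa using hf'per 0]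
  -- continuous maps on the circle
  set Ff : C(AddCircle (2 * π), ℂ) :=
    ⟨AddCircle.liftIco (2 * π) 0 f,
      AddCircle.liftIco_zero_continuous f0.symm hfc.continuousOn⟩ with hFf
  set FG : C(AddCircle (2 * π), ℂ) :=
    ⟨AddCircle.liftIco (2 * π) 0 G,
      AddCircle.liftIco_zero_continuous G0.symm hGc.continuousOn⟩ with hFG
  have h02 : (0:ℝ) < 2 * π := hπ
  have hcf : ∀ n : ℤ, fourierCoeff (⇑Ff) n = fourierCoeffOn h02 f n := by
    intro n
    have := fourierCoeff_liftIco_eq (T := 2 * π) (a := 0) f n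
    simpa [hFf] using this
  have hcG : ∀ n : ℤ, fourierCoeff (⇑FG) n = fourierCoeffOn h02 G n := by
    intro n
    have := fourierCoeff_liftIco_eq (T := 2 * π) (a := 0) G n
    simpa [hFG] using this
  -- fourier coefficients of the derivative
  have key : ∀ n : ℤ, fourierCoeffOn h02 f' n = Complex.I * n * fourierCoeffOn h02 f n := by
    intro n
    rcases eq_or_ne n 0 with rfl | hn
    · rw [fourierCoeffOn_eq_integral]
      have h1 : ∫ x in (0:ℝ)..(2*π), fourier (-(0:ℤ)) (x : AddCircle (2*π - 0)) • f' x
          = ∫ x in (0:ℝ)..(2*π), f' x := by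
        apply intervalIntegral.integral_congr
        intro x _
        simp [fourier_zero]
      rw [h1, intervalIntegral.integral_eq_sub_of_hasDerivAt (fun x _ => hf x)
        (hf'c.intervalIntegrable _ _), f0, sub_self]
      simp
    · have h := fourierCoeffOn_of_hasDerivAt h02 hn (fun x _ => hf x)
        (hf'c.intervalIntegrable _ _)
      rw [f0, sub_self, mul_zero, zero_sub] at h
      have hne1 : ((2:ℂ) * Real.pi) ≠ 0 := by
        simp [Real.pi_ne_zero]
      have hne2 : (n:ℂ) ≠ 0 := Int.cast_ne_zero.2 hn
      have hI := Complex.I_ne_zero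
      rw [h]
      push_cast
      field_simp
      ring
  -- coefficient of G
  have hGn : ∀ n : ℤ, fourierCoeffOn h02 G n
      = Complex.I * ((n : ℂ) + (c : ℂ)) * fourierCoeffOn h02 f n := by
    intro n
    have hadd : fourierCoeffOn h02 G n
        = fourierCoeffOn h02 f' n + Complex.I * c * fourierCoeffOn h02 f n := by
      rw [fourierCoeffOn_eq_integral, fourierCoeffOn_eq_integral, fourierCoeffOn_eq_integral]
      have hint1 : IntervalIntegrable
          (fun x : ℝ => fourier (-n) (x : AddCircle (2*π - 0)) • f' x) volume 0 (2*π) :=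
        (((map_continuous (fourier (-n))).comp (AddCircle.continuous_mk' _)).smul
          hf'c).intervalIntegrable _ _
      have hint2 : IntervalIntegrable
          (fun x : ℝ => Complex.I * c * (fourier (-n) (x : AddCircle (2*π - 0)) • f x))
          volume 0 (2*π) :=
        (continuous_const.mul (((map_continuous (fourier (-n))).comp
          (AddCircle.continuous_mk' _)).smul hfc)).intervalIntegrable _ _
      have hsplit : ∫ x in (0:ℝ)..(2*π), fourier (-n) (x : AddCircle (2*π - 0)) • G x
          = (∫ x in (0:ℝ)..(2*π), fourier (-n) (x : AddCircle (2*π - 0)) • f' x)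
            + ∫ x in (0:ℝ)..(2*π),
                Complex.I * c * (fourier (-n) (x : AddCircle (2*π - 0)) • f x) := by
        rw [← intervalIntegral.integral_add hint1 hint2]
        apply intervalIntegral.integral_congr
        intro x _
        simp only [hGdef, smul_eq_mul]
        ring
      rw [hsplit, intervalIntegral.integral_const_mul, smul_add]
      congr 1
      rw [mul_smul_comm]
    rw [hadd, key n]
    ring
  -- norm relation
  have hnorm : ∀ n : ℤ, ‖fourierCoeff (⇑FG) n‖ ^ 2
      = ((n : ℝ) + c) ^ 2 * ‖fourierCoeff (⇑Ff) n‖ ^ 2 := by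
    intro n
    rw [hcG n, hGn n, hcf n]
    rw [norm_mul, norm_mul, Complex.norm_I, one_mul]
    have : ((n : ℂ) + (c : ℂ)) = (((n : ℝ) + c : ℝ) : ℂ) := by push_cast; ring
    rw [this, Complex.norm_real, mul_pow, Real.norm_eq_abs, sq_abs]
  -- termwise bound
  have hterm : ∀ n : ℤ, ((c : ℝ) - round c) ^ 2 * ‖fourierCoeff (⇑Ff) n‖ ^ 2
      ≤ ‖fourierCoeff (⇑FG) n‖ ^ 2 := by
    intro n
    rw [hnorm n]
    apply mul_le_mul_of_nonneg_right _ (sq_nonneg _)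
    have h := round_le c (-n)
    rw [show (c - ((-n : ℤ) : ℝ)) = (n : ℝ) + c by push_cast; ring] at h
    calc (c - round c) ^ 2 = |c - round c| ^ 2 := (sq_abs _).symm
      _ ≤ |(n : ℝ) + c| ^ 2 := pow_le_pow_left₀ (abs_nonneg _) h 2
      _ = ((n : ℝ) + c) ^ 2 := sq_abs _
  -- Parseval for f and G
  have hPf : ∑' n : ℤ, ‖fourierCoeff (⇑Ff) n‖ ^ 2
      = (1 / (2*π)) * ∫ x in (0:ℝ)..(2*π), ‖f x‖ ^ 2 := by
    rw [parseval_continuous Ff, integral_haar_eq_intervalIntegral (fun t => ‖Ff t‖ ^ 2)]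
    congr 1
    rw [intervalIntegral.integral_of_le hπ.le, intervalIntegral.integral_of_le hπ.le]
    apply MeasureTheory.setIntegral_congr_ae measurableSet_Ioc
    have hae : ∀ᵐ (x : ℝ), x ≠ 2 * π := by
      rw [MeasureTheory.ae_iff]
      simpa using Real.volume_singleton (x := 2 * π)
    filter_upwards [hae] with x hx hmem
    have hx' : x ∈ Set.Ico (0:ℝ) (2*π) := ⟨hmem.1.le, lt_of_le_of_ne hmem.2 hx⟩
    simp only [hFf, ContinuousMap.coe_mk]
    rw [AddCircle.liftIco_zero_coe_apply hx']
  have hPG : ∑' n : ℤ, ‖fourierCoeff (⇑FG) n‖ ^ 2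
      = (1 / (2*π)) * ∫ x in (0:ℝ)..(2*π), ‖G x‖ ^ 2 := by
    rw [parseval_continuous FG, integral_haar_eq_intervalIntegral (fun t => ‖FG t‖ ^ 2)]
    congr 1
    rw [intervalIntegral.integral_of_le hπ.le, intervalIntegral.integral_of_le hπ.le]
    apply MeasureTheory.setIntegral_congr_ae measurableSet_Ioc
    have hae : ∀ᵐ (x : ℝ), x ≠ 2 * π := by
      rw [MeasureTheory.ae_iff]
      simpa using Real.volume_singleton (x := 2 * π)
    filter_upwards [hae] with x hx hmem
    have hx' : x ∈ Set.Ico (0:ℝ) (2*π) := ⟨hmem.1.le, lt_of_le_of_ne hmem.2 hx⟩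
    simp only [hFG, ContinuousMap.coe_mk]
    rw [AddCircle.liftIco_zero_coe_apply hx']
  -- summability
  have hSf : Summable (fun n : ℤ => ‖fourierCoeff (⇑Ff) n‖ ^ 2) := summable_sq_fourierCoeff Ff
  have hSG : Summable (fun n : ℤ => ‖fourierCoeff (⇑FG) n‖ ^ 2) := summable_sq_fourierCoeff FG
  -- compare tsums
  have htsum : ((c : ℝ) - round c) ^ 2 * ∑' n : ℤ, ‖fourierCoeff (⇑Ff) n‖ ^ 2
      ≤ ∑' n : ℤ, ‖fourierCoeff (⇑FG) n‖ ^ 2 := by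
    rw [← Summable.tsum_mul_left _ hSf]
    exact (hSf.mul_left _).tsum_le_tsum hterm hSG
  -- convert Icc integrals to interval integrals
  have hicc1 : ∫ x in Set.Icc (0:ℝ) (2*π), ‖f x‖ ^ 2
      = ∫ x in (0:ℝ)..(2*π), ‖f x‖ ^ 2 := by
    rw [intervalIntegral.integral_of_le hπ.le, MeasureTheory.integral_Icc_eq_integral_Ioc]
  have hicc2 : ∫ x in Set.Icc (0:ℝ) (2*π), ‖f' x + Complex.I * c * f x‖ ^ 2
      = ∫ x in (0:ℝ)..(2*π), ‖G x‖ ^ 2 := by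
    rw [intervalIntegral.integral_of_le hπ.le, MeasureTheory.integral_Icc_eq_integral_Ioc]
  rw [hicc1, hicc2]
  rw [hPf, hPG] at htsum
  have := mul_le_mul_of_nonneg_left htsum (le_of_lt hπ)
  calc ((c:ℝ) - round c) ^ 2 * ∫ x in (0:ℝ)..(2*π), ‖f x‖ ^ 2
      = (2*π) * (((c:ℝ) - round c) ^ 2 * ((1 / (2*π)) * ∫ x in (0:ℝ)..(2*π), ‖f x‖ ^ 2)) := by
        field_simp
    _ ≤ (2*π) * ((1 / (2*π)) * ∫ x in (0:ℝ)..(2*π), ‖G x‖ ^ 2) := this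
    _ = ∫ x in (0:ℝ)..(2*π), ‖G x‖ ^ 2 := by
        field_simp

-- transfer an integral over the pi-cube to an iterated integral slicing coordinate i
lemma cube_integral_slice {m : ℕ} (i : Fin (m + 1)) (F : (Fin (m + 1) → ℝ) → ℝ)
    (hF : Continuous F) :
    ∫ θ in Set.Icc (0 : Fin (m+1) → ℝ) (fun _ => 2 * π), F θ
      = ∫ y in Set.Icc (0 : Fin m → ℝ) (fun _ => 2 * π),
          ∫ x in Set.Icc (0:ℝ) (2 * π), F (Fin.insertNth (α := fun _ => ℝ) i x y) := by
  set e := MeasurableEquiv.piFinSuccAbove (fun _ : Fin (m+1) => ℝ) i with he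
  have hmp : MeasurePreserving e volume volume :=
    volume_preserving_piFinSuccAbove (fun _ : Fin (m+1) => ℝ) i
  have hset : Set.Icc (0 : Fin (m+1) → ℝ) (fun _ => 2 * π)
      = e ⁻¹' ((Set.Icc (0:ℝ) (2 * π)) ×ˢ (Set.Icc (0 : Fin m → ℝ) (fun _ => 2 * π))) := by
    ext θ
    simp only [Set.mem_Icc, Set.mem_preimage, Set.mem_prod, he,
      MeasurableEquiv.piFinSuccAbove_apply, Fin.insertNthEquiv, Equiv.coe_fn_symm_mk, Pi.le_def]
    constructor
    · rintro ⟨h1, h2⟩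
      exact ⟨⟨h1 i, h2 i⟩, ⟨fun j => h1 _, fun j => h2 _⟩⟩
    · rintro ⟨⟨hi1, hi2⟩, ⟨hs1, hs2⟩⟩
      constructor
      · intro j
        rcases eq_or_ne j i with rfl | hne
        · exact hi1
        · obtain ⟨k, rfl⟩ := Fin.exists_succAbove_eq hne
          exact hs1 k
      · intro j
        rcases eq_or_ne j i with rfl | hne
        · exact hi2
        · obtain ⟨k, rfl⟩ := Fin.exists_succAbove_eq hne
          exact hs2 k
  have hstep1 : ∫ θ in Set.Icc (0 : Fin (m+1) → ℝ) (fun _ => 2 * π), F θ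
      = ∫ p in (Set.Icc (0:ℝ) (2 * π)) ×ˢ (Set.Icc (0 : Fin m → ℝ) (fun _ => 2 * π)),
          F (e.symm p) := by
    rw [hset]
    have := hmp.setIntegral_preimage_emb e.measurableEmbedding (fun p => F (e.symm p))
      ((Set.Icc (0:ℝ) (2 * π)) ×ˢ (Set.Icc (0 : Fin m → ℝ) (fun _ => 2 * π)))
    rw [← this]
    apply setIntegral_congr_fun (by rw [← hset]; exact measurableSet_Icc)
    intro θ _
    simp
  rw [hstep1]
  have hsymm : ∀ p : ℝ × (Fin m → ℝ), e.symm p = Fin.insertNth (α := fun _ => ℝ) i p.1 p.2 := by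
    intro p
    simp [he, MeasurableEquiv.piFinSuccAbove_symm_apply, Fin.insertNthEquiv]
  have hcont_ins : Continuous (fun p : ℝ × (Fin m → ℝ) => Fin.insertNth (α := fun _ => ℝ) i p.1 p.2) := by
    apply continuous_pi
    intro j
    refine Fin.succAboveCases i ?_ ?_ j
    · simpa using continuous_fst
    · intro k
      simp only [Fin.insertNth_apply_succAbove]; exact (continuous_apply k).comp continuous_snd
  have hGc : Continuous (fun p : ℝ × (Fin m → ℝ) => F (Fin.insertNth (α := fun _ => ℝ) i p.1 p.2)) :=
    hF.comp hcont_ins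
  have hint : IntegrableOn (fun p : ℝ × (Fin m → ℝ) => F (Fin.insertNth (α := fun _ => ℝ) i p.1 p.2))
      ((Set.Icc (0:ℝ) (2 * π)) ×ˢ (Set.Icc (0 : Fin m → ℝ) (fun _ => 2 * π))) := by
    apply hGc.continuousOn.integrableOn_compact
    exact isCompact_Icc.prod isCompact_Icc
  calc ∫ p in (Set.Icc (0:ℝ) (2 * π)) ×ˢ (Set.Icc (0 : Fin m → ℝ) (fun _ => 2 * π)), F (e.symm p)
      = ∫ p in (Set.Icc (0:ℝ) (2 * π)) ×ˢ (Set.Icc (0 : Fin m → ℝ) (fun _ => 2 * π)),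
          F (Fin.insertNth (α := fun _ => ℝ) i p.1 p.2) := by
        apply setIntegral_congr_fun (measurableSet_Icc.prod measurableSet_Icc)
        intro p _
        simp only [hsymm p]
    _ = ∫ y in Set.Icc (0 : Fin m → ℝ) (fun _ => 2 * π),
          ∫ x in Set.Icc (0:ℝ) (2 * π), F (Fin.insertNth (α := fun _ => ℝ) i x y) := by
        rw [Measure.volume_eq_prod, ← Measure.prod_restrict]
        apply integral_prod_symm
        rw [Measure.prod_restrict, ← Measure.volume_eq_prod]
        exact hint
lemma slice_ineq {m : ℕ} (c : ℝ) (i : Fin (m + 1)) (φ : (Fin (m+1) → ℝ) → ℂ)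
    (hφ : ContDiff ℝ (⊤ : ℕ∞) φ)
    (hper : ∀ (θ : Fin (m+1) → ℝ) (mm : Fin (m+1) → ℤ),
      φ (θ + fun j => 2 * π * (mm j : ℝ)) = φ θ) :
    (c - round c) ^ 2 * ∫ θ in Set.Icc (0 : Fin (m+1) → ℝ) (fun _ => 2 * π), ‖φ θ‖ ^ 2
      ≤ ∫ θ in Set.Icc (0 : Fin (m+1) → ℝ) (fun _ => 2 * π),
          ‖fderiv ℝ φ θ (Pi.single i 1) + Complex.I * c * φ θ‖ ^ 2 := by
  have hφc : Continuous φ := hφ.continuous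
  have hDc : Continuous (fun θ : Fin (m+1) → ℝ => fderiv ℝ φ θ (Pi.single i 1)) := by
    exact (hφ.continuous_fderiv (by simp)).clm_apply continuous_const
  have hF1 : Continuous (fun θ : Fin (m+1) → ℝ =>
      ‖fderiv ℝ φ θ (Pi.single i 1) + Complex.I * c * φ θ‖ ^ 2) := by
    exact ((hDc.add (continuous_const.mul hφc)).norm.pow 2)
  have hF0 : Continuous (fun θ : Fin (m+1) → ℝ => ‖φ θ‖ ^ 2) := (hφc.norm.pow 2)
  rw [cube_integral_slice i _ hF0, cube_integral_slice i _ hF1]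
  -- path derivative facts
  have hins : ∀ (x : ℝ) (y : Fin m → ℝ),
      Fin.insertNth (α := fun _ => ℝ) i x y
        = Fin.insertNth (α := fun _ => ℝ) i 0 y + x • (Pi.single i 1 : Fin (m+1) → ℝ) := by
    intro x y
    funext j
    refine Fin.succAboveCases i ?_ ?_ j
    · simp
    · intro k
      simp [Fin.succAbove_ne i k, Pi.single_eq_of_ne (Fin.succAbove_ne i k)]
  have hL : ∀ (y : Fin m → ℝ) (x : ℝ),
      HasDerivAt (fun t : ℝ => Fin.insertNth (α := fun _ => ℝ) i t y)
        (Pi.single i 1) x := by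
    intro y x
    have : (fun t : ℝ => Fin.insertNth (α := fun _ => ℝ) i t y)
        = fun t : ℝ => Fin.insertNth (α := fun _ => ℝ) i 0 y + t • (Pi.single i 1 : Fin (m+1) → ℝ) := by
      funext t; exact hins t y
    rw [this]
    simpa using ((hasDerivAt_id x).smul_const (Pi.single i 1 : Fin (m+1) → ℝ)).const_add
      (Fin.insertNth (α := fun _ => ℝ) i 0 y)
  -- per-slice 1D inequality
  have hslice : ∀ y : Fin m → ℝ,
      (c - round c) ^ 2 * ∫ x in Set.Icc (0:ℝ) (2 * π),
          ‖φ (Fin.insertNth (α := fun _ => ℝ) i x y)‖ ^ 2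
        ≤ ∫ x in Set.Icc (0:ℝ) (2 * π),
            ‖fderiv ℝ φ (Fin.insertNth (α := fun _ => ℝ) i x y) (Pi.single i 1)
              + Complex.I * c * φ (Fin.insertNth (α := fun _ => ℝ) i x y)‖ ^ 2 := by
    intro y
    apply oneD c (fun x => φ (Fin.insertNth (α := fun _ => ℝ) i x y))
      (fun x => fderiv ℝ φ (Fin.insertNth (α := fun _ => ℝ) i x y) (Pi.single i 1))
    · intro x
      exact ((hφ.differentiable (by simp) (Fin.insertNth (α := fun _ => ℝ) i x y)).hasFDerivAt).comp_hasDerivAt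
        x (hL y x)
    · have hcont_path : Continuous (fun x : ℝ => Fin.insertNth (α := fun _ => ℝ) i x y) := by
        apply continuous_pi
        intro j
        refine Fin.succAboveCases i ?_ ?_ j
        · simp only [Fin.insertNth_apply_same]; exact continuous_id
        · intro k
          simp only [Fin.insertNth_apply_succAbove]
          exact continuous_const
      exact hDc.comp hcont_path
    · intro x
      have heq : Fin.insertNth (α := fun _ => ℝ) i (x + 2*π) y
          = Fin.insertNth (α := fun _ => ℝ) i x y
            + fun j => 2 * π * (((Pi.single i 1 : Fin (m+1) → ℤ) j : ℤ) : ℝ) := by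
        funext j
        refine Fin.succAboveCases i ?_ ?_ j
        · simp
        · intro k
          simp [Fin.succAbove_ne i k, Pi.single_eq_of_ne (Fin.succAbove_ne i k)]
      rw [heq, hper]
  -- integrate over y
  have hcont_ins : Continuous (fun p : ℝ × (Fin m → ℝ) =>
      Fin.insertNth (α := fun _ => ℝ) i p.1 p.2) := by
    apply continuous_pi
    intro j
    refine Fin.succAboveCases i ?_ ?_ j
    · simpa using continuous_fst
    · intro k
      simp only [Fin.insertNth_apply_succAbove]; exact (continuous_apply k).comp continuous_snd
  have hint1 : IntegrableOn (fun p : ℝ × (Fin m → ℝ) =>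
      ‖fderiv ℝ φ (Fin.insertNth (α := fun _ => ℝ) i p.1 p.2) (Pi.single i 1)
        + Complex.I * c * φ (Fin.insertNth (α := fun _ => ℝ) i p.1 p.2)‖ ^ 2)
      ((Set.Icc (0:ℝ) (2 * π)) ×ˢ (Set.Icc (0 : Fin m → ℝ) (fun _ => 2 * π))) :=
    ((hF1.comp hcont_ins).continuousOn).integrableOn_compact (isCompact_Icc.prod isCompact_Icc)
  have hint0 : IntegrableOn (fun p : ℝ × (Fin m → ℝ) =>
      ‖φ (Fin.insertNth (α := fun _ => ℝ) i p.1 p.2)‖ ^ 2)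
      ((Set.Icc (0:ℝ) (2 * π)) ×ˢ (Set.Icc (0 : Fin m → ℝ) (fun _ => 2 * π))) :=
    ((hF0.comp hcont_ins).continuousOn).integrableOn_compact (isCompact_Icc.prod isCompact_Icc)
  -- turn IntegrableOn of product set into Integrable w.r.t. product of restricted measures
  rw [← MeasureTheory.integral_const_mul]
  have hprodmeas : ∀ (f : ℝ × (Fin m → ℝ) → ℝ), IntegrableOn f
      ((Set.Icc (0:ℝ) (2 * π)) ×ˢ (Set.Icc (0 : Fin m → ℝ) (fun _ => 2 * π))) →
      Integrable f ((volume.restrict (Set.Icc (0:ℝ) (2*π))).prod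
        (volume.restrict (Set.Icc (0 : Fin m → ℝ) (fun _ => 2 * π)))) := by
    intro f hf
    rw [Measure.prod_restrict, ← Measure.volume_eq_prod]
    exact hf
  apply integral_mono
  · exact Integrable.const_mul ((hprodmeas _ hint0).integral_prod_right) _
  · exact (hprodmeas _ hint1).integral_prod_right
  · intro y
    exact hslice y

end AuxiliaryLemmas

section MainTheorem
open Real

/-- **Proposition 4.2.** Lower bound for the twisted Dirichlet
energy of a smooth periodic function with respect to a periodic family of
positive definite metrics `g(θ)` whose eigenvalues are bounded above by `N`:
the energy is at least `λ(k,b)/N` times the `L²` norm. -/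
theorem fiberwise_twisted_energy_lower_bound
    (n k : ℕ) (hn : 1 ≤ n) (hk : 1 ≤ k) (b : Fin n → ℝ)
    (g : (Fin n → ℝ) → Matrix (Fin n) (Fin n) ℝ)
    (hg_smooth : ∀ i j, ContDiff ℝ (⊤ : ℕ∞) (fun θ => g θ i j))
    (hg_per : ∀ (θ : Fin n → ℝ) (m : Fin n → ℤ),
      g (θ + fun i => 2 * Real.pi * (m i : ℝ)) = g θ)
    (hg_pos : ∀ θ, (g θ).PosDef)
    (N : ℝ) (hN : 0 < N)
    (hg_bound : ∀ (θ : Fin n → ℝ) (v : Fin n → ℝ),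
      v ⬝ᵥ (g θ).mulVec v ≤ N * ∑ i, (v i) ^ 2)
    (φ : (Fin n → ℝ) → ℂ) (hφ : ContDiff ℝ (⊤ : ℕ∞) φ)
    (hper : ∀ (θ : Fin n → ℝ) (m : Fin n → ℤ),
      φ (θ + fun i => 2 * Real.pi * (m i : ℝ)) = φ θ) :
    (∫ θ in Set.Icc (0 : Fin n → ℝ) (fun _ => 2 * Real.pi),
        (∑ i, ∑ j,
          (fderiv ℝ φ θ (Pi.single i 1) + Complex.I * (k : ℂ) * (b i : ℂ) * φ θ) *
          (starRingEnd ℂ)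
            (fderiv ℝ φ θ (Pi.single j 1) + Complex.I * (k : ℂ) * (b j : ℂ) * φ θ) *
          (((g θ)⁻¹ i j : ℝ) : ℂ)).re) ≥
      (sInf {x : ℝ | ∃ m : Fin n → ℤ, x = ∑ i, ((m i : ℝ) + k * b i) ^ 2}) / N *
        ∫ θ in Set.Icc (0 : Fin n → ℝ) (fun _ => 2 * Real.pi),
          ‖φ θ‖ ^ 2 := by
  obtain ⟨m, rfl⟩ : ∃ m, n = m + 1 := ⟨n - 1, (Nat.succ_pred_eq_of_pos hn).symm⟩
  set v : Fin (m+1) → (Fin (m+1) → ℝ) → ℂ := fun i θ =>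
    fderiv ℝ φ θ (Pi.single i 1) + Complex.I * (k : ℂ) * (b i : ℂ) * φ θ with hv
  set cube := Set.Icc (0 : Fin (m+1) → ℝ) (fun _ => 2 * Real.pi) with hcube
  -- continuity facts
  have hφc : Continuous φ := hφ.continuous
  have hvc : ∀ i, Continuous (v i) := by
    intro i
    exact ((hφ.continuous_fderiv (by simp)).clm_apply continuous_const).add
      (continuous_const.mul hφc)
  have hginv_c : ∀ i j, Continuous (fun θ => (g θ)⁻¹ i j) := by
    have hgc : Continuous g := continuous_matrix (fun i j => (hg_smooth i j).continuous)
    have hdet : Continuous fun θ => (g θ).det := hgc.matrix_det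
    have hadj : Continuous fun θ => (g θ).adjugate := hgc.matrix_adjugate
    intro i j
    have : (fun θ => (g θ)⁻¹ i j)
        = fun θ => ((g θ).det)⁻¹ * (g θ).adjugate i j := by
      funext θ
      rw [Matrix.inv_def, Ring.inverse_eq_inv']
      rfl
    rw [this]
    exact (hdet.inv₀ fun θ => (hg_pos θ).det_pos.ne').mul
      ((continuous_apply j).comp ((continuous_apply i).comp hadj))
  have hrec : Continuous (fun θ => (∑ i, ∑ j, v i θ * (starRingEnd ℂ) (v j θ) *
      (((g θ)⁻¹ i j : ℝ) : ℂ)).re) := by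
    apply Complex.continuous_re.comp
    apply continuous_finset_sum
    intro i _
    apply continuous_finset_sum
    intro j _
    exact (((hvc i).mul ((Complex.continuous_conj).comp (hvc j))).mul
      (Complex.continuous_ofReal.comp (hginv_c i j)))
  have hnsc : Continuous (fun θ => (1/N) * ∑ i, ‖v i θ‖ ^ 2) := by
    apply continuous_const.mul
    apply continuous_finset_sum
    intro i _
    exact ((hvc i).norm.pow 2)
  -- pointwise bound
  have hpoint : ∀ θ, (1/N) * ∑ i, ‖v i θ‖ ^ 2
      ≤ (∑ i, ∑ j, v i θ * (starRingEnd ℂ) (v j θ) * (((g θ)⁻¹ i j : ℝ) : ℂ)).re := by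
    intro θ
    rw [re_hermitian_sum ((g θ)⁻¹) (fun i => v i θ), sum_norm_sq_eq (fun i => v i θ),
      mul_add]
    have h1 := real_quad_inv_lower (g θ) (hg_pos θ) N hN (hg_bound θ)
      (fun i => (v i θ).re)
    have h2 := real_quad_inv_lower (g θ) (hg_pos θ) N hN (hg_bound θ)
      (fun i => (v i θ).im)
    exact add_le_add h1 h2
  -- integral comparison
  have hstep1 : ∫ θ in cube, (1/N) * ∑ i, ‖v i θ‖ ^ 2
      ≤ ∫ θ in cube, (∑ i, ∑ j, v i θ * (starRingEnd ℂ) (v j θ) *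
          (((g θ)⁻¹ i j : ℝ) : ℂ)).re := by
    apply setIntegral_mono_on
    · exact hnsc.continuousOn.integrableOn_compact isCompact_Icc
    · exact hrec.continuousOn.integrableOn_compact isCompact_Icc
    · exact measurableSet_Icc
    · exact fun θ _ => hpoint θ
  -- split the sum integral
  have hstep2 : ∫ θ in cube, (1/N) * ∑ i, ‖v i θ‖ ^ 2
      = (1/N) * ∑ i, ∫ θ in cube, ‖v i θ‖ ^ 2 := by
    rw [MeasureTheory.integral_const_mul]
    congr 1
    apply integral_finset_sum
    intro i _
    exact ((hvc i).norm.pow 2).continuousOn.integrableOn_compact isCompact_Icc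
  -- slice inequality for each i
  have hstep3 : ∀ i, ((k : ℝ) * b i - round ((k : ℝ) * b i)) ^ 2 * ∫ θ in cube, ‖φ θ‖ ^ 2
      ≤ ∫ θ in cube, ‖v i θ‖ ^ 2 := by
    intro i
    have h := slice_ineq ((k : ℝ) * b i) i φ hφ hper
    have hcast : ∀ θ, Complex.I * (((k : ℝ) * b i : ℝ) : ℂ) * φ θ
        = Complex.I * (k : ℂ) * (b i : ℂ) * φ θ := by
      intro θ
      push_cast
      ring
    simp only [hcast] at h
    exact h
  -- sum up
  have hsum : (∑ i, ((k : ℝ) * b i - round ((k : ℝ) * b i)) ^ 2) * ∫ θ in cube, ‖φ θ‖ ^ 2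
      ≤ ∑ i, ∫ θ in cube, ‖v i θ‖ ^ 2 := by
    rw [Finset.sum_mul]
    exact Finset.sum_le_sum fun i _ => hstep3 i
  -- conclude
  rw [ge_iff_le, sInf_lattice_eq (m+1) (fun i => (k : ℝ) * b i)]
  have habs : ∫ θ in cube, ‖φ θ‖ ^ 2 = ∫ θ in cube, ‖φ θ‖ ^ 2 := by
    apply setIntegral_congr_fun measurableSet_Icc
    intro θ _
    simp
  rw [habs]
  have hN' : (0:ℝ) ≤ 1/N := by positivity
  have := mul_le_mul_of_nonneg_left (le_trans hsum (le_of_eq rfl)) hN'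
  calc (∑ i, ((k:ℝ) * b i - round ((k:ℝ) * b i)) ^ 2) / N * ∫ θ in cube, ‖φ θ‖ ^ 2
      = (1/N) * ((∑ i, ((k:ℝ) * b i - round ((k:ℝ) * b i)) ^ 2) * ∫ θ in cube, ‖φ θ‖ ^ 2) := by
        ring
    _ ≤ (1/N) * ∑ i, ∫ θ in cube, ‖v i θ‖ ^ 2 := mul_le_mul_of_nonneg_left hsum hN'
    _ = ∫ θ in cube, (1/N) * ∑ i, ‖v i θ‖ ^ 2 := hstep2.symm
    _ ≤ _ := hstep1

end MainTheorem
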